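/- Let m, n ≥ 1, U ⊆ ℝᵐ open, and let φ : U → ℝⁿ be a smooth Euclidean biharmonic morphism with λ²(x) = |Dφₓ|²/n (the square of its dilation). Then the trace identity n·Δ(λ²) + 2·div(Σ_α Δφ^α · ∇φ^α) = |Δφ|² holds on U. -/

import Mathlib

noncomputable section

abbrev E (n : ℕ) := EuclideanSpace ℝ (Fin n)

/-- Partial derivative in the `i`-th coordinate direction. -/
def pd {m : ℕ} (u : E m → ℝ) (i : Fin m) : E m → ℝ :=
  fun x => fderiv ℝ u x (EuclideanSpace.single i 1)

/-- Euclidean Laplacian `Δu = Σᵢ ∂²u/∂xᵢ²`. -/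
def lap {m : ℕ} (u : E m → ℝ) : E m → ℝ :=
  fun x => ∑ i, pd (pd u i) i x

/-- Euclidean divergence of a vector field. -/
def div' {m : ℕ} (V : E m → E m) : E m → ℝ :=
  fun x => ∑ i, pd (fun y => V y i) i x

/-- `φ : U → ℝⁿ` is a Euclidean biharmonic morphism if for every open `V ⊆ ℝⁿ` and every
smooth biharmonic `f : V → ℝ`, the composition `f ∘ φ` is biharmonic on `U ∩ φ⁻¹(V)`. -/
def IsBiharmonicMorphism {m n : ℕ} (U : Set (E m)) (φ : E m → E n) : Prop :=
  ∀ V : Set (E n), IsOpen V → ∀ f : E n → ℝ, ContDiffOn ℝ (⊤ : ℕ∞) f V →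
    (∀ y ∈ V, lap (lap f) y = 0) →
    ∀ x ∈ U ∩ φ ⁻¹' V, lap (lap (f ∘ φ)) x = 0

/-- Squared Hilbert–Schmidt norm of the derivative, `|Dφₓ|² = Σᵢ |Dφₓ(eᵢ)|²`. -/
def hsNormSq {m n : ℕ} (φ : E m → E n) (x : E m) : ℝ :=
  ∑ i : Fin m, ‖fderiv ℝ φ x (EuclideanSpace.single i 1)‖ ^ 2

/-! ### Auxiliary lemmas -/

open Filter Topology

section Aux

variable {m : ℕ} {U : Set (E m)} {u v : E m → ℝ} {x : E m}

lemma diffAt {F : Type*} [NormedAddCommGroup F] [NormedSpace ℝ F] {w : E m → F}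
    (hU : IsOpen U) (hu : ContDiffOn ℝ (⊤ : ℕ∞) w U) (hx : x ∈ U) :
    DifferentiableAt ℝ w x :=
  (hu.contDiffAt (hU.mem_nhds hx)).differentiableAt (by simp)

lemma contDiffOn_pd (hU : IsOpen U) (hu : ContDiffOn ℝ (⊤ : ℕ∞) u U) (i : Fin m) :
    ContDiffOn ℝ (⊤ : ℕ∞) (pd u i) U :=
  (hu.fderiv_of_isOpen hU (by simp)).clm_apply contDiffOn_const

lemma contDiffOn_lap (hU : IsOpen U) (hu : ContDiffOn ℝ (⊤ : ℕ∞) u U) :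
    ContDiffOn ℝ (⊤ : ℕ∞) (lap u) U := by
  have : ContDiffOn ℝ (⊤ : ℕ∞) (fun x => ∑ i, pd (pd u i) i x) U :=
    ContDiffOn.sum fun i _ => contDiffOn_pd hU (contDiffOn_pd hU hu i) i
  exact this

lemma pd_congr {i : Fin m} (h : u =ᶠ[𝓝 x] v) : pd u i x = pd v i x := by
  unfold pd; rw [Filter.EventuallyEq.fderiv_eq h]

lemma pd_congr_nhds {i : Fin m} (h : u =ᶠ[𝓝 x] v) : pd u i =ᶠ[𝓝 x] pd v i :=
  h.eventuallyEq_nhds.mono fun _ hy => pd_congr hy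

lemma lap_congr (h : u =ᶠ[𝓝 x] v) : lap u x = lap v x :=
  Finset.sum_congr rfl fun _ _ => pd_congr (pd_congr_nhds h)

lemma pd_add (hu : DifferentiableAt ℝ u x) (hv : DifferentiableAt ℝ v x) {i : Fin m} :
    pd (fun y => u y + v y) i x = pd u i x + pd v i x := by
  unfold pd; rw [fderiv_fun_add hu hv]; simp

lemma pd_mul (hu : DifferentiableAt ℝ u x) (hv : DifferentiableAt ℝ v x) {i : Fin m} :
    pd (fun y => u y * v y) i x = pd u i x * v x + u x * pd v i x := by
  unfold pd; rw [fderiv_fun_mul hu hv]; simp; ring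

lemma pd_const_mul (c : ℝ) (hu : DifferentiableAt ℝ u x) {i : Fin m} :
    pd (fun y => c * u y) i x = c * pd u i x := by
  unfold pd; rw [fderiv_const_mul hu]; simp

lemma pd_sum {ι : Type*} {s : Finset ι} {f : ι → E m → ℝ} {i : Fin m}
    (hf : ∀ a ∈ s, DifferentiableAt ℝ (f a) x) :
    pd (fun y => ∑ a ∈ s, f a y) i x = ∑ a ∈ s, pd (f a) i x := by
  unfold pd; rw [fderiv_fun_sum hf]; simp

lemma pd_const {i : Fin m} (c : ℝ) : pd (fun _ : E m => c) i x = 0 := by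
  unfold pd; rw [fderiv_fun_const]; simp

lemma ev_of_U (hU : IsOpen U) (hx : x ∈ U) {p : E m → Prop} (h : ∀ y ∈ U, p y) :
    ∀ᶠ y in 𝓝 x, p y :=
  Filter.eventually_iff_exists_mem.2 ⟨U, hU.mem_nhds hx, h⟩

lemma lap_mul (hU : IsOpen U) (hu : ContDiffOn ℝ (⊤ : ℕ∞) u U) (hv : ContDiffOn ℝ (⊤ : ℕ∞) v U)
    (hx : x ∈ U) :
    lap (fun y => u y * v y) x
      = lap u x * v x + 2 * ∑ i, pd u i x * pd v i x + u x * lap v x := by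
  have key : ∀ i : Fin m, pd (pd (fun y => u y * v y) i) i x
      = pd (pd u i) i x * v x + 2 * (pd u i x * pd v i x) + u x * pd (pd v i) i x := by
    intro i
    have hev : pd (fun y => u y * v y) i =ᶠ[𝓝 x]
        fun y => pd u i y * v y + u y * pd v i y :=
      ev_of_U hU hx fun y hy => pd_mul (diffAt hU hu hy) (diffAt hU hv hy)
    rw [pd_congr hev,
      pd_add ((diffAt hU (contDiffOn_pd hU hu i) hx).fun_mul (diffAt hU hv hx))
        ((diffAt hU hu hx).fun_mul (diffAt hU (contDiffOn_pd hU hv i) hx)),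
      pd_mul (diffAt hU (contDiffOn_pd hU hu i) hx) (diffAt hU hv hx),
      pd_mul (diffAt hU hu hx) (diffAt hU (contDiffOn_pd hU hv i) hx)]
    ring
  show ∑ i, pd (pd (fun y => u y * v y) i) i x = _
  rw [Finset.sum_congr rfl fun i _ => key i]
  rw [Finset.sum_add_distrib, Finset.sum_add_distrib, ← Finset.sum_mul, ← Finset.mul_sum,
    ← Finset.mul_sum]
  rfl

lemma lap_add (hU : IsOpen U) (hu : ContDiffOn ℝ (⊤ : ℕ∞) u U) (hv : ContDiffOn ℝ (⊤ : ℕ∞) v U)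
    (hx : x ∈ U) :
    lap (fun y => u y + v y) x = lap u x + lap v x := by
  have key : ∀ i : Fin m, pd (pd (fun y => u y + v y) i) i x
      = pd (pd u i) i x + pd (pd v i) i x := by
    intro i
    have hev : pd (fun y => u y + v y) i =ᶠ[𝓝 x] fun y => pd u i y + pd v i y :=
      ev_of_U hU hx fun y hy => pd_add (diffAt hU hu hy) (diffAt hU hv hy)
    rw [pd_congr hev,
      pd_add (diffAt hU (contDiffOn_pd hU hu i) hx) (diffAt hU (contDiffOn_pd hU hv i) hx)]
  show ∑ i, pd (pd (fun y => u y + v y) i) i x = _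
  rw [Finset.sum_congr rfl fun i _ => key i, Finset.sum_add_distrib]
  rfl

lemma lap_sum (hU : IsOpen U) {ι : Type*} {s : Finset ι} {f : ι → E m → ℝ}
    (hf : ∀ a ∈ s, ContDiffOn ℝ (⊤ : ℕ∞) (f a) U) (hx : x ∈ U) :
    lap (fun y => ∑ a ∈ s, f a y) x = ∑ a ∈ s, lap (f a) x := by
  have key : ∀ i : Fin m, pd (pd (fun y => ∑ a ∈ s, f a y) i) i x
      = ∑ a ∈ s, pd (pd (f a) i) i x := by
    intro i
    have hev : pd (fun y => ∑ a ∈ s, f a y) i =ᶠ[𝓝 x] fun y => ∑ a ∈ s, pd (f a) i y :=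
      ev_of_U hU hx fun y hy => pd_sum fun a ha => diffAt hU (hf a ha) hy
    rw [pd_congr hev, pd_sum fun a ha => diffAt hU (contDiffOn_pd hU (hf a ha) i) hx]
  show ∑ i, pd (pd (fun y => ∑ a ∈ s, f a y) i) i x = _
  rw [Finset.sum_congr rfl fun i _ => key i, Finset.sum_comm]
  rfl

lemma lap_const_mul (hU : IsOpen U) (c : ℝ) (hu : ContDiffOn ℝ (⊤ : ℕ∞) u U) (hx : x ∈ U) :
    lap (fun y => c * u y) x = c * lap u x := by
  have key : ∀ i : Fin m, pd (pd (fun y => c * u y) i) i x = c * pd (pd u i) i x := by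
    intro i
    have hev : pd (fun y => c * u y) i =ᶠ[𝓝 x] fun y => c * pd u i y :=
      ev_of_U hU hx fun y hy => pd_const_mul c (diffAt hU hu hy)
    rw [pd_congr hev, pd_const_mul c (diffAt hU (contDiffOn_pd hU hu i) hx)]
  show ∑ i, pd (pd (fun y => c * u y) i) i x = _
  rw [Finset.sum_congr rfl fun i _ => key i, ← Finset.mul_sum]
  rfl

lemma lap_of_eq_const (c : ℝ) (h : ∀ y, u y = c) : lap u x = 0 := by
  have hu : u = fun _ => c := funext h
  subst hu
  refine Finset.sum_eq_zero fun i _ => ?_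
  have h2 : pd (fun _ : E m => c) i = fun _ : E m => (0:ℝ) := funext fun _ => pd_const c
  rw [h2, pd_const]

/-- Coordinates of the gradient are the partial derivatives. -/
lemma grad_coord (u : E m → ℝ) (y : E m) (i : Fin m) :
    gradient u y i = pd u i y := by
  have h1 : gradient u y i = inner ℝ (EuclideanSpace.single i (1:ℝ)) (gradient u y) := by
    rw [EuclideanSpace.inner_single_left]; simp
  rw [h1, real_inner_comm]
  show inner ℝ ((InnerProductSpace.toDual ℝ (E m)).symm (fderiv ℝ u y)) _ = _
  rw [InnerProductSpace.toDual_symm_apply]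
  rfl

end Aux

section Coord

variable {m n : ℕ}

lemma pd_coord {φ : E m → E n} {y : E m} (hd : DifferentiableAt ℝ φ y)
    (α : Fin n) (i : Fin m) :
    pd (fun z => φ z α) i y = fderiv ℝ φ y (EuclideanSpace.single i 1) α := by
  have hcomp : (fun z => φ z α) = (⇑(EuclideanSpace.proj (𝕜 := ℝ) α)) ∘ φ := rfl
  have h2 := ((EuclideanSpace.proj (𝕜 := ℝ) α).hasFDerivAt.comp y hd.hasFDerivAt).fderiv
  show fderiv ℝ (fun z => φ z α) y (EuclideanSpace.single i 1) = _
  rw [hcomp, h2]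
  rfl

lemma diff_proj (α : Fin n) (z : E n) :
    DifferentiableAt ℝ (fun v : E n => v α) z :=
  (EuclideanSpace.proj (𝕜 := ℝ) α).differentiableAt

lemma pd_proj (α i : Fin n) (z : E n) :
    pd (fun v : E n => v α) i z = (EuclideanSpace.single i (1:ℝ) : E n) α := by
  show fderiv ℝ (fun v : E n => v α) z _ = _
  have h : (fun v : E n => v α) = ⇑(EuclideanSpace.proj (𝕜 := ℝ) α) := rfl
  rw [h, ContinuousLinearMap.fderiv]
  rfl

lemma biharmonic_proj (α : Fin n) (y : E n) :
    lap (lap (fun v : E n => v α)) y = 0 := by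
  refine lap_of_eq_const 0 fun z => ?_
  refine Finset.sum_eq_zero fun i _ => ?_
  have h2 : pd (fun v : E n => v α) i
      = fun _ : E n => (EuclideanSpace.single i (1:ℝ) : E n) α :=
    funext fun w => pd_proj α i w
  rw [h2, pd_const]

lemma pd_sq (α i : Fin n) (z : E n) :
    pd (fun v : E n => v α * v α) i z
      = (2 * (EuclideanSpace.single i (1:ℝ) : E n) α) * z α := by
  rw [pd_mul (diff_proj α z) (diff_proj α z), pd_proj]; ring

lemma biharmonic_sq (α : Fin n) (y : E n) :
    lap (lap (fun v : E n => v α * v α)) y = 0 := by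
  refine lap_of_eq_const
    (∑ i, (2 * (EuclideanSpace.single i (1:ℝ) : E n) α)
        * (EuclideanSpace.single i (1:ℝ) : E n) α) fun z => ?_
  refine Finset.sum_congr rfl fun i _ => ?_
  have h2 : pd (fun v : E n => v α * v α) i
      = fun w : E n => (2 * (EuclideanSpace.single i (1:ℝ) : E n) α) * w α :=
    funext fun w => pd_sq α i w
  rw [h2, pd_const_mul _ (diff_proj α z), pd_proj]

end Coord

/-- The trace identity `nΔ(λ²) + 2 div(Σ_α Δφ^α ∇φ^α) = |Δφ|²` for a smooth Euclidean
biharmonic morphism of square dilation `λ² = |Dφ|²/n`. -/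
theorem biharmonicMorphism_trace_identity {m n : ℕ} (hm : 1 ≤ m) (hn : 1 ≤ n)
    (U : Set (E m)) (hU : IsOpen U) (φ : E m → E n) (hφ : ContDiffOn ℝ (⊤ : ℕ∞) φ U)
    (hmor : IsBiharmonicMorphism U φ) :
    ∀ x ∈ U,
      (n : ℝ) * lap (fun y => hsNormSq φ y / n) x
        + 2 * div' (fun y =>
            ∑ α : Fin n,
              lap (fun z => φ z α) y • gradient (fun z => φ z α) y) x
        = ∑ α : Fin n, (lap (fun y => φ y α) x) ^ 2 := by
  intro x hx
  have hn0 : (n : ℝ) ≠ 0 := Nat.cast_ne_zero.2 (by omega)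
  have hφα : ∀ α : Fin n, ContDiffOn ℝ (⊤ : ℕ∞) (fun z => φ z α) U := fun α =>
    (EuclideanSpace.proj (𝕜 := ℝ) α).contDiff.comp_contDiffOn hφ
  have hLα : ∀ α, ContDiffOn ℝ (⊤ : ℕ∞) (lap (fun z => φ z α)) U := fun α =>
    contDiffOn_lap hU (hφα α)
  have hGi : ∀ (α : Fin n) (i : Fin m), ContDiffOn ℝ (⊤ : ℕ∞) (pd (fun z => φ z α) i) U :=
    fun α i => contDiffOn_pd hU (hφα α) i
  have hG : ∀ α : Fin n, ContDiffOn ℝ (⊤ : ℕ∞)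
      (fun y => ∑ i, pd (fun z => φ z α) i y * pd (fun z => φ z α) i y) U :=
    fun α => ContDiffOn.sum fun i _ => (hGi α i).mul (hGi α i)
  -- coordinates are biharmonic
  have hb1 : ∀ α : Fin n, ∀ y ∈ U, lap (lap (fun z => φ z α)) y = 0 := by
    intro α y hy
    exact hmor Set.univ isOpen_univ (fun v => v α)
      ((EuclideanSpace.proj (𝕜 := ℝ) α).contDiff.contDiffOn)
      (fun w _ => biharmonic_proj α w) y ⟨hy, trivial⟩
  -- squares of coordinates are biharmonic after composition
  have hb2 : ∀ α : Fin n, ∀ y ∈ U, lap (lap (fun z => φ z α * φ z α)) y = 0 := by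
    intro α y hy
    exact hmor Set.univ isOpen_univ (fun v => v α * v α)
      (((EuclideanSpace.proj (𝕜 := ℝ) α).contDiff.mul
        (EuclideanSpace.proj (𝕜 := ℝ) α).contDiff).contDiffOn)
      (fun w _ => biharmonic_sq α w) y ⟨hy, trivial⟩
  -- the key Bochner-type identity for each coordinate
  have hdagger : ∀ α : Fin n,
      lap (fun y => ∑ i, pd (fun z => φ z α) i y * pd (fun z => φ z α) i y) x
        = -(lap (fun z => φ z α) x * lap (fun z => φ z α) x)
          - 2 * ∑ i, pd (fun z => φ z α) i x * pd (lap (fun z => φ z α)) i x := by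
    intro α
    have hev : lap (fun z => φ z α * φ z α) =ᶠ[𝓝 x]
        fun y => 2 * ((fun z => φ z α) y * lap (fun z => φ z α) y)
          + 2 * (∑ i, pd (fun z => φ z α) i y * pd (fun z => φ z α) i y) := by
      refine ev_of_U hU hx fun y hy => ?_
      rw [lap_mul hU (hφα α) (hφα α) hy]
      ring
    have h0 : lap (fun y => 2 * ((fun z => φ z α) y * lap (fun z => φ z α) y)
        + 2 * (∑ i, pd (fun z => φ z α) i y * pd (fun z => φ z α) i y)) x = 0 := by
      rw [← lap_congr hev]; exact hb2 α x hx
    rw [lap_add hU (contDiffOn_const.mul ((hφα α).mul (hLα α)))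
        (contDiffOn_const.mul (hG α)) hx,
      lap_const_mul hU 2 ((hφα α).mul (hLα α)) hx,
      lap_const_mul hU 2 (hG α) hx,
      lap_mul hU (hφα α) (hLα α) hx,
      hb1 α x hx] at h0
    linarith [h0]
  -- Term 1
  have hHev : (fun y => hsNormSq φ y / n) =ᶠ[𝓝 x]
      fun y => (n:ℝ)⁻¹
        * ∑ α : Fin n, ∑ i, pd (fun z => φ z α) i y * pd (fun z => φ z α) i y := by
    refine ev_of_U hU hx fun y hy => ?_
    have hd := diffAt hU hφ hy
    show hsNormSq φ y / n = _
    unfold hsNormSq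
    rw [div_eq_inv_mul]
    congr 1
    have h1 : ∀ i : Fin m, ‖fderiv ℝ φ y (EuclideanSpace.single i 1)‖ ^ 2
        = ∑ α : Fin n, pd (fun z => φ z α) i y * pd (fun z => φ z α) i y := by
      intro i
      rw [EuclideanSpace.norm_eq, Real.sq_sqrt (by positivity)]
      refine Finset.sum_congr rfl fun α _ => ?_
      rw [pd_coord hd α i, Real.norm_eq_abs, sq_abs, pow_two]
    rw [Finset.sum_congr rfl fun i _ => h1 i, Finset.sum_comm]
  have hT1 : (n : ℝ) * lap (fun y => hsNormSq φ y / n) x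
      = ∑ α : Fin n,
          lap (fun y => ∑ i, pd (fun z => φ z α) i y * pd (fun z => φ z α) i y) x := by
    have e1 : lap (fun y => hsNormSq φ y / n) x
        = (n:ℝ)⁻¹ * lap (fun y => ∑ α : Fin n,
            ∑ i, pd (fun z => φ z α) i y * pd (fun z => φ z α) i y) x := by
      rw [lap_congr hHev]
      exact lap_const_mul hU _ (ContDiffOn.sum fun α _ => hG α) hx
    have e2 : lap (fun y => ∑ α : Fin n,
          ∑ i, pd (fun z => φ z α) i y * pd (fun z => φ z α) i y) x
        = ∑ α : Fin n,
            lap (fun y => ∑ i, pd (fun z => φ z α) i y * pd (fun z => φ z α) i y) x :=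
      lap_sum hU (fun α _ => hG α) hx
    rw [e1, e2, ← mul_assoc, mul_inv_cancel₀ hn0, one_mul]
  -- Term 2
  have hT2 : div' (fun y =>
        ∑ α : Fin n, lap (fun z => φ z α) y • gradient (fun z => φ z α) y) x
      = ∑ α : Fin n,
          ((∑ i, pd (lap (fun z => φ z α)) i x * pd (fun z => φ z α) i x)
            + lap (fun z => φ z α) x * lap (fun z => φ z α) x) := by
    have hVi : ∀ i : Fin m,
        (fun y => (∑ α : Fin n,
            lap (fun z => φ z α) y • gradient (fun z => φ z α) y : E m) i)
          = fun y => ∑ α : Fin n, lap (fun z => φ z α) y * pd (fun z => φ z α) i y := by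
      intro i; funext y
      show (∑ α : Fin n, lap (fun z => φ z α) y • gradient (fun z => φ z α) y) i = _
      rw [WithLp.ofLp_sum, Finset.sum_apply]
      refine Finset.sum_congr rfl fun α _ => ?_
      show lap (fun z => φ z α) y * gradient (fun z => φ z α) y i = _
      rw [grad_coord]
    have key : ∀ i : Fin m,
        pd (fun y => (∑ α : Fin n,
            lap (fun z => φ z α) y • gradient (fun z => φ z α) y : E m) i) i x
          = ∑ α : Fin n, (pd (lap (fun z => φ z α)) i x * pd (fun z => φ z α) i x
              + lap (fun z => φ z α) x * pd (pd (fun z => φ z α) i) i x) := by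
      intro i
      rw [hVi i, pd_sum fun α _ => (diffAt hU (hLα α) hx).fun_mul (diffAt hU (hGi α i) hx)]
      exact Finset.sum_congr rfl fun α _ =>
        pd_mul (diffAt hU (hLα α) hx) (diffAt hU (hGi α i) hx)
    show ∑ i, pd (fun y => (∑ α : Fin n,
        lap (fun z => φ z α) y • gradient (fun z => φ z α) y : E m) i) i x = _
    rw [Finset.sum_congr rfl fun i _ => key i, Finset.sum_comm]
    refine Finset.sum_congr rfl fun α _ => ?_
    rw [Finset.sum_add_distrib, ← Finset.mul_sum]
    rfl
  -- put everything together
  rw [hT1, hT2, Finset.sum_congr rfl fun α _ => hdagger α, Finset.mul_sum,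
    ← Finset.sum_add_distrib]
  refine Finset.sum_congr rfl fun α _ => ?_
  have hS : (∑ i, pd (fun z => φ z α) i x * pd (lap (fun z => φ z α)) i x)
      = ∑ i, pd (lap (fun z => φ z α)) i x * pd (fun z => φ z α) i x :=
    Finset.sum_congr rfl fun i _ => mul_comm _ _
  rw [hS]
  ring

end
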